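/- There exists a constant K > 0 such that for all n ≥ 1, E[ Σ_{y∈ℤ} N_n(y)² ] ≤ K n^{3/2}. -/

import Mathlib

/-!
`∑_y N_n(y)²` counts the pairs `(j, k) ∈ [0, n]²` with `Y_j = Y_k`. The increment `Y_k - Y_j` is a
sum of `|k - j|` independent fair signs, so `P(Y_j = Y_k)` is `C(2t, t) / 4^t` when `|k - j| = 2t`
and `0` otherwise, and `C(2t, t)² (2t + 1) ≤ 16^t` turns this into
`P(Y_j = Y_k) ≤ (|k - j| + 1)^(-1/2)`. For each `j` the sum over `k` is then at most `4 √(n + 1)`,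
so the expectation is at most `4 (n + 1)^(3/2) ≤ 16 n^(3/2)`.
-/

open MeasureTheory ProbabilityTheory Filter

noncomputable section

/-- The simple random walk `Y_n = η_1 + ⋯ + η_n`, with `Y_0 = 0`. -/
def walk {Ω : Type*} (η : ℕ → Ω → ℤ) (n : ℕ) (ω : Ω) : ℤ :=
  ∑ k ∈ Finset.range n, η (k + 1) ω

/-- The local time `N_n(y) = #{0 ≤ k ≤ n : Y_k = y}` of the walk. -/
def localTime {Ω : Type*} (η : ℕ → Ω → ℤ) (n : ℕ) (y : ℤ) (ω : Ω) : ℕ :=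
  ((Finset.range (n + 1)).filter fun k => walk η k ω = y).card

open Finset

theorem Finset.sum_comp_le_sum_of_injOn {ι κ M : Type*} [DecidableEq κ] [AddCommMonoid M]
    [PartialOrder M] [IsOrderedAddMonoid M] {s : Finset ι} {t : Finset κ} {e : ι → κ} {g : κ → M}
    (he : Set.InjOn e s) (hst : Set.MapsTo e s t) (hg : ∀ k ∈ t, 0 ≤ g k) :
    ∑ i ∈ s, g (e i) ≤ ∑ k ∈ t, g k := by
  rw [← sum_image he]
  exact sum_le_sum_of_subset_of_nonneg (image_subset_iff.2 hst) fun k hk _ => hg k hk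

theorem Finset.sum_sq_card_filter_le {α β : Type*} [DecidableEq β] (s : Finset α) (t : Finset β)
    (f : α → β) : ∑ y ∈ t, #{a ∈ s | f a = y} ^ 2 ≤ #{p ∈ s ×ˢ s | f p.1 = f p.2} := by
  calc ∑ y ∈ t, #{a ∈ s | f a = y} ^ 2
      = ∑ y ∈ t, #{p ∈ {p ∈ s ×ˢ s | f p.1 = f p.2} | f p.1 = y} := by
        refine sum_congr rfl fun y _ => ?_
        rw [sq, ← card_product]
        congr 1
        ext ⟨a, b⟩
        simp only [mem_product, mem_filter]
        grind
    _ = #{p ∈ {p ∈ s ×ˢ s | f p.1 = f p.2} | f p.1 ∈ t} :=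
        sum_card_fiberwise_eq_card_filter _ _ _
    _ ≤ #{p ∈ s ×ˢ s | f p.1 = f p.2} := card_filter_le _ _

theorem Nat.centralBinom_sq_mul_le (t : ℕ) : t.centralBinom ^ 2 * (2 * t + 1) ≤ 16 ^ t := by
  induction t with
  | zero => simp
  | succ t ih =>
    have hrec := Nat.succ_mul_centralBinom_succ t
    refine Nat.le_of_mul_le_mul_left ?_ (by positivity : 0 < (t + 1) ^ 2)
    calc (t + 1) ^ 2 * ((t + 1).centralBinom ^ 2 * (2 * (t + 1) + 1))
        = ((t + 1) * (t + 1).centralBinom) ^ 2 * (2 * t + 3) := by ring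
      _ = 4 * ((2 * t + 1) * (2 * t + 3)) * (t.centralBinom ^ 2 * (2 * t + 1)) := by
          rw [hrec]; ring
      _ ≤ 4 * (4 * (t + 1) ^ 2) * 16 ^ t :=
          Nat.mul_le_mul (Nat.mul_le_mul_left 4 (by nlinarith)) ih
      _ = (t + 1) ^ 2 * 16 ^ (t + 1) := by ring

theorem sum_range_inv_sqrt_succ_le (m : ℕ) : ∑ d ∈ range m, (√(d + 1))⁻¹ ≤ 2 * √m := by
  have hterm (d : ℕ) : (√(d + 1))⁻¹ ≤ 2 * √((d + 1 : ℕ) : ℝ) - 2 * √d := by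
    have hy : 0 < √(d + 1) := Real.sqrt_pos.2 (by positivity)
    have hx2 : √d ^ 2 = d := Real.sq_sqrt (by positivity)
    have hy2 : √(d + 1) ^ 2 = d + 1 := Real.sq_sqrt (by positivity)
    push_cast
    rw [inv_le_iff_one_le_mul₀' hy]
    nlinarith [sq_nonneg (√(d + 1) - √d), Real.sqrt_nonneg d]
  calc ∑ d ∈ range m, (√(d + 1))⁻¹
      ≤ ∑ d ∈ range m, (2 * √((d + 1 : ℕ) : ℝ) - 2 * √d) := sum_le_sum fun d _ => hterm d
    _ = 2 * √m := by rw [sum_range_sub (fun d => 2 * √d)]; simp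

theorem sum_range_comp_dist_le {g : ℕ → ℝ} (hg : ∀ d, 0 ≤ g d) {j n : ℕ} (hj : j ≤ n) :
    ∑ k ∈ range (n + 1), g (j.dist k) ≤ 2 * ∑ d ∈ range (n + 1), g d := by
  rw [← sum_filter_add_sum_filter_not _ (· ≤ j), two_mul]
  refine add_le_add
    (Finset.sum_comp_le_sum_of_injOn (fun k hk k' hk' h => ?_) (fun k hk => ?_) fun d _ => hg d)
    (Finset.sum_comp_le_sum_of_injOn (fun k hk k' hk' h => ?_) (fun k hk => ?_) fun d _ => hg d)
  all_goals
    simp only [coe_filter, mem_range, Set.mem_ofPred_eq, coe_range,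
      Set.mem_Iio, Nat.dist] at *
    omega

theorem sum_sum_inv_sqrt_dist_succ_le (n : ℕ) :
    ∑ j ∈ range (n + 1), ∑ k ∈ range (n + 1), (√(j.dist k + 1))⁻¹
      ≤ 4 * (n + 1) * √(n + 1) := by
  calc ∑ j ∈ range (n + 1), ∑ k ∈ range (n + 1), (√(j.dist k + 1))⁻¹
      ≤ ∑ j ∈ range (n + 1), 2 * (2 * √((n + 1 : ℕ) : ℝ)) := by
        refine sum_le_sum fun j hj => ?_
        grw [sum_range_comp_dist_le (g := fun d : ℕ => (√(d + 1))⁻¹) (fun d => by positivity)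
          (Nat.lt_succ_iff.1 (mem_range.1 hj)), sum_range_inv_sqrt_succ_le]
    _ = 4 * (n + 1) * √(n + 1) := by
        simp only [Nat.cast_add, Nat.cast_one, sum_const, card_range, nsmul_eq_mul]; ring

theorem four_mul_succ_mul_sqrt_succ_le {x : ℝ} (hx : 1 ≤ x) :
    4 * (x + 1) * √(x + 1) ≤ 16 * x ^ (3 / 2 : ℝ) := by
  calc 4 * (x + 1) * √(x + 1) ≤ 4 * (2 * x) * √(4 * x) := by gcongr <;> linarith
    _ = 16 * x ^ (3 / 2 : ℝ) := by
        rw [show (3 / 2 : ℝ) = 1 + 1 / 2 by norm_num, Real.rpow_add (by positivity),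
          Real.rpow_one, ← Real.sqrt_eq_rpow, Real.sqrt_mul (by norm_num),
          show √4 = 2 by rw [show (4 : ℝ) = 2 ^ 2 by norm_num, Real.sqrt_sq (by norm_num)]]
        ring

/-- `P(Y_m = y) = C(m, (m + y) / 2) / 2^m`; the guard `0 ≤ y + m` is needed because `Int.toNat`
sends negative numbers to `0`. -/
def walkProb (m : ℕ) (y : ℤ) : ℝ :=
  if (y + m) % 2 = 0 ∧ 0 ≤ y + m then (m.choose ((y + m) / 2).toNat : ℝ) / 2 ^ m else 0

theorem walkProb_zero_left (y : ℤ) : walkProb 0 y = if y = 0 then 1 else 0 := by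
  unfold walkProb
  split_ifs with hpar hy hy
  · simp [hy]
  · rw [Nat.choose_eq_zero_of_lt (by omega)]; simp
  · omega
  · rfl

theorem walkProb_succ (m : ℕ) (y : ℤ) :
    walkProb (m + 1) y = (walkProb m (y - 1) + walkProb m (y + 1)) / 2 := by
  unfold walkProb
  push_cast
  by_cases hy : (y + (m + 1)) % 2 = 0 ∧ 0 ≤ y + (m + 1)
  · obtain ⟨s, hs⟩ : ∃ s : ℕ, y + (m + 1) = 2 * s := ⟨(y + m + 1).toNat / 2, by omega⟩
    rw [if_pos hy, if_pos (by omega : (y + 1 + m) % 2 = 0 ∧ 0 ≤ y + 1 + m),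
      show ((y + (m + 1)) / 2).toNat = s by omega, show ((y + 1 + m) / 2).toNat = s by omega]
    rcases s with _ | s
    · rw [if_neg (by omega)]
      simp only [Nat.choose_zero_right, Nat.cast_one]
      ring
    · rw [if_pos (by omega), show ((y - 1 + m) / 2).toNat = s by omega, Nat.choose_succ_succ]
      push_cast
      ring
  · rw [if_neg hy, if_neg (by omega), if_neg (by omega)]
    simp

theorem walkProb_zero_le (m : ℕ) : walkProb m 0 ≤ (√(m + 1))⁻¹ := by
  unfold walkProb
  split_ifs with h
  · obtain ⟨t, rfl⟩ : ∃ t, m = 2 * t := ⟨m / 2, by omega⟩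
    have h16 : ((2 : ℝ) ^ (2 * t)) ^ 2 = 16 ^ t := by
      rw [← pow_mul, show 2 * t * 2 = 4 * t by ring, pow_mul]; norm_num
    rw [show ((0 + ((2 * t : ℕ) : ℤ)) / 2).toNat = t by omega, ← Nat.centralBinom_eq_two_mul_choose,
      ← Real.sqrt_inv, Real.le_sqrt (by positivity) (by positivity), ← one_div,
      le_div_iff₀ (by positivity), div_pow, h16, div_mul_eq_mul_div, div_le_one (by positivity)]
    exact_mod_cast Nat.centralBinom_sq_mul_le t
  · positivity

section Rademacher

variable {Ω ι : Type*} [MeasurableSpace Ω] {μ : Measure Ω}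

structure IsRademacher (ξ : Ω → ℤ) (μ : Measure Ω) : Prop where
  measure_eq_one : μ {ω | ξ ω = 1} = 1 / 2
  measure_eq_neg_one : μ {ω | ξ ω = -1} = 1 / 2

theorem IsRademacher.ae_eq_one_or_eq_neg_one [IsProbabilityMeasure μ] {ξ : Ω → ℤ}
    (hξ : IsRademacher ξ μ) (hξm : Measurable ξ) : ∀ᵐ ω ∂μ, ξ ω = 1 ∨ ξ ω = -1 := by
  have hdisj : Disjoint {ω | ξ ω = 1} {ω | ξ ω = -1} :=
    Set.disjoint_left.2 fun ω h1 h2 => by simp_all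
  have hfull : μ ({ω | ξ ω = 1} ∪ {ω | ξ ω = -1}) = 1 := by
    rw [measure_union hdisj (hξm (measurableSet_singleton _)), hξ.measure_eq_one,
      hξ.measure_eq_neg_one, ENNReal.add_halves]
  exact (prob_compl_eq_zero_iff ((hξm (measurableSet_singleton _)).union
    (hξm (measurableSet_singleton _)))).2 hfull

theorem IsRademacher.measureReal_add_eq [IsProbabilityMeasure μ] {S ξ : Ω → ℤ}
    (hξ : IsRademacher ξ μ) (hS : Measurable S) (hξm : Measurable ξ) (hind : IndepFun S ξ μ)
    (y : ℤ) :
    μ.real {ω | S ω + ξ ω = y} = (μ.real {ω | S ω = y - 1} + μ.real {ω | S ω = y + 1}) / 2 := by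
  have hsplit : {ω | S ω + ξ ω = y} =ᵐ[μ]
      (({ω | S ω = y - 1} ∩ {ω | ξ ω = 1}) ∪ ({ω | S ω = y + 1} ∩ {ω | ξ ω = -1}) : Set Ω) := by
    filter_upwards [hξ.ae_eq_one_or_eq_neg_one hξm] with ω hω
    change (S ω + ξ ω = y) = ((S ω = y - 1 ∧ ξ ω = 1) ∨ (S ω = y + 1 ∧ ξ ω = -1))
    exact propext (by omega)
  have hdisj : Disjoint ({ω | S ω = y - 1} ∩ {ω | ξ ω = 1})
      ({ω | S ω = y + 1} ∩ {ω | ξ ω = -1}) :=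
    Set.disjoint_left.2 fun ω h1 h2 => by simp_all
  have hmul (a b : ℤ) :
      μ.real ({ω | S ω = a} ∩ {ω | ξ ω = b}) = μ.real {ω | S ω = a} * μ.real {ω | ξ ω = b} := by
    simp only [measureReal_def, ← ENNReal.toReal_mul]
    congr 1
    exact hind.measure_inter_preimage_eq_mul _ _ (measurableSet_singleton a)
      (measurableSet_singleton b)
  have hhalf (b : ℤ) (hb : μ {ω | ξ ω = b} = 1 / 2) : μ.real {ω | ξ ω = b} = 1 / 2 := by
    simp [measureReal_def, hb]
  rw [measureReal_congr hsplit, measureReal_union hdisj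
    ((hS (measurableSet_singleton _)).inter (hξm (measurableSet_singleton _))), hmul, hmul,
    hhalf 1 hξ.measure_eq_one, hhalf (-1) hξ.measure_eq_neg_one]
  ring

theorem measureReal_sum_eq_walkProb [IsProbabilityMeasure μ] {η : ι → Ω → ℤ}
    (hm : ∀ i, Measurable (η i)) (hind : iIndepFun η μ) (hη : ∀ i, IsRademacher (η i) μ)
    (s : Finset ι) (y : ℤ) : μ.real {ω | ∑ i ∈ s, η i ω = y} = walkProb s.card y := by
  classical
  induction s using Finset.induction_on generalizing y with
  | empty =>
    rw [card_empty, walkProb_zero_left]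
    by_cases hy : y = 0 <;> simp [hy, eq_comm]
  | insert a s ha ih =>
    have key := (hη a).measureReal_add_eq (measurable_sum s fun i _ => hm i) (hm a)
      (by simpa only [sum_fn] using hind.indepFun_finsetSum_of_notMem hm ha) y
    simp only [sum_insert ha, card_insert_of_notMem ha, walkProb_succ, ← ih, add_comm (η a _)]
    exact key

end Rademacher

theorem walk_add_sum_Ico {Ω : Type*} {η : ℕ → Ω → ℤ} {j k : ℕ} (hjk : j ≤ k) (ω : Ω) :
    walk η j ω + ∑ i ∈ Ico (j + 1) (k + 1), η i ω = walk η k ω := by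
  rw [← sum_Ico_add', walk, walk, sum_range_add_sum_Ico _ hjk]

section Walk

variable {Ω : Type*} [MeasurableSpace Ω] {μ : Measure Ω} {η : ℕ → Ω → ℤ}

theorem measurable_walk (hm : ∀ i, Measurable (η i)) (n : ℕ) : Measurable (walk η n) :=
  measurable_sum _ fun i _ => hm (i + 1)

theorem measureReal_walk_eq_walk [IsProbabilityMeasure μ] (hm : ∀ i, Measurable (η i))
    (hind : iIndepFun η μ) (hη : ∀ i, IsRademacher (η i) μ) (j k : ℕ) :
    μ.real {ω | walk η j ω = walk η k ω} = walkProb (j.dist k) 0 := by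
  wlog hjk : j ≤ k generalizing j k
  · simpa only [eq_comm, Nat.dist_comm] using this k j (by omega)
  have hset : {ω | walk η j ω = walk η k ω} = {ω | ∑ i ∈ Ico (j + 1) (k + 1), η i ω = 0} := by
    ext ω
    simp only [Set.mem_ofPred_eq, ← walk_add_sum_Ico hjk ω]
    omega
  rw [hset, measureReal_sum_eq_walkProb hm hind hη, Nat.card_Ico, Nat.dist_eq_sub_of_le hjk]
  simp

theorem integral_sum_sq_localTime_le [IsFiniteMeasure μ] (hm : ∀ i, Measurable (η i)) (n : ℕ)
    (t : Finset ℤ) :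
    ∫ ω, ∑ y ∈ t, (localTime η n y ω : ℝ) ^ 2 ∂μ
      ≤ ∑ j ∈ range (n + 1), ∑ k ∈ range (n + 1),
          μ.real {ω | walk η j ω = walk η k ω} := by
  set E : ℕ → ℕ → Set Ω := fun j k => {ω | walk η j ω = walk η k ω}
  have hE (j k : ℕ) : MeasurableSet (E j k) :=
    measurableSet_eq_fun (measurable_walk hm j) (measurable_walk hm k)
  have hint (j k : ℕ) : Integrable ((E j k).indicator (1 : Ω → ℝ)) μ :=
    (integrable_const 1).indicator (hE j k)
  have hpoint (ω : Ω) : ∑ y ∈ t, (localTime η n y ω : ℝ) ^ 2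
      ≤ ∑ j ∈ range (n + 1), ∑ k ∈ range (n + 1), (E j k).indicator 1 ω := by
    have := Finset.sum_sq_card_filter_le (range (n + 1)) t (walk η · ω)
    calc ∑ y ∈ t, (localTime η n y ω : ℝ) ^ 2
        ≤ #{p ∈ range (n + 1) ×ˢ range (n + 1) | walk η p.1 ω = walk η p.2 ω} := by
          exact_mod_cast this
      _ = _ := by
          rw [natCast_card_filter, sum_product]
          simp [E, Set.indicator_apply]
  calc ∫ ω, ∑ y ∈ t, (localTime η n y ω : ℝ) ^ 2 ∂μ
      ≤ ∫ ω, ∑ j ∈ range (n + 1), ∑ k ∈ range (n + 1), (E j k).indicator 1 ω ∂μ :=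
        integral_mono_of_nonneg (ae_of_all _ fun ω => by positivity)
          (integrable_finsetSum _ fun j _ => integrable_finsetSum _ fun k _ => hint j k)
          (ae_of_all _ hpoint)
    _ = _ := by
        rw [integral_finsetSum _ fun j _ => integrable_finsetSum _ fun k _ => hint j k]
        refine sum_congr rfl fun j _ => ?_
        rw [integral_finsetSum _ fun k _ => hint j k]
        exact sum_congr rfl fun k _ => integral_indicator_one (hE j k)

end Walk

/-- Since `|Y_k| ≤ k ≤ n`, the sum over `y ∈ ℤ` reduces to the finite sum over `y ∈ [-n, n]`. -/
theorem expectation_sum_sq_localTime_le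
    {Ω : Type*} [MeasureSpace Ω] [IsProbabilityMeasure (ℙ : Measure Ω)]
    (η : ℕ → Ω → ℤ)
    (hη_meas : ∀ k, Measurable (η k))
    (hη_indep : iIndepFun η ℙ)
    (hη_one : ∀ k, ℙ {ω | η k ω = 1} = 1/2)
    (hη_negone : ∀ k, ℙ {ω | η k ω = -1} = 1/2) :
    ∃ K > (0 : ℝ), ∀ n : ℕ, 1 ≤ n →
      (∫ ω, (∑ y ∈ Finset.Icc (-(n : ℤ)) n, (localTime η n y ω : ℝ) ^ 2) ∂ℙ)
        ≤ K * (n : ℝ) ^ (3/2 : ℝ) := by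
  have hη : ∀ k, IsRademacher (η k) ℙ := fun k => ⟨hη_one k, hη_negone k⟩
  refine ⟨16, by norm_num, fun n hn => ?_⟩
  calc (∫ ω, (∑ y ∈ Finset.Icc (-(n : ℤ)) n, (localTime η n y ω : ℝ) ^ 2) ∂ℙ)
      ≤ ∑ j ∈ range (n + 1), ∑ k ∈ range (n + 1),
          (ℙ : Measure Ω).real {ω | walk η j ω = walk η k ω} :=
        integral_sum_sq_localTime_le hη_meas n _
    _ ≤ ∑ j ∈ range (n + 1), ∑ k ∈ range (n + 1), (√(j.dist k + 1))⁻¹ := by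
        gcongr with j _ k _
        rw [measureReal_walk_eq_walk hη_meas hη_indep hη]
        exact_mod_cast walkProb_zero_le _
    _ ≤ 4 * (n + 1) * √(n + 1) := sum_sum_inv_sqrt_dist_succ_le n
    _ ≤ 16 * (n : ℝ) ^ (3 / 2 : ℝ) := four_mul_succ_mul_sqrt_succ_le (by exact_mod_cast hn)
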